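/- Let 𝔤 be simply laced of rank r and define a ℤ-module V with basis c, o_1, …, o_r and the following operators for i = 1,…,r: s_i(c) = −c; s_i(o_i) = o_i; s_i(o_j) = −o_j if (α_i,α_j) = 0; s_i(o_j) = −o_j − o_i if (α_i,α_j) = −1; t_γ(c) = c and t_γ(o_i) = o_i + ⟨α_i, γ⟩ c for γ ∈ Q^∨. Then the map sending K ⊗ 1 ↦ c and α_i^∨ ⊗ 1 ↦ −o_i defines an isomorphism of Ŵ-modules (𝔥_ℤ ⊕ ℤK) ⊗ ℤ_sign → V, where Ŵ acts on 𝔥_ℤ ⊕ ℤK by s_i(x) = x − ⟨α_i,x⟩α_i^∨ and t_γ(x) = x − (x,γ)K. -/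

import Mathlib

/-! `Φ` is a coordinate swap with a sign, so everything is a direct computation. The only
coordinate with content is the `o_i`-coordinate of `s_i`: since `A` is simply laced, `⟨α_i, x⟩ = 2 xᵢ - ∑_{j ∼ i} xⱼ` over the Dynkin neighbours `j`
of `i`, and the sign twist turns `xᵢ - ⟨α_i, x⟩` into the formula for `s_i(o_i)`. -/

open Finset

section SimplyLaced

variable {ι R : Type*} [Fintype ι] [DecidableEq ι] [CommRing R] [DecidableEq R]

def dynkinNeighbors (A : ι → ι → R) (i : ι) : Finset ι :=
  univ.filter fun j => j ≠ i ∧ A i j = -1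

theorem sum_cartan_row_mul_eq {A : ι → ι → R} {i : ι} (hdiag : A i i = 2)
    (hoff : ∀ j, i ≠ j → A i j = 0 ∨ A i j = -1) (x : ι → R) :
    ∑ j, A i j * x j = 2 * x i - ∑ j ∈ dynkinNeighbors A i, x j := by
  rw [← sum_filter_add_sum_filter_not univ (fun j => j ≠ i ∧ A i j = -1)]
  have neighbors : ∑ j ∈ dynkinNeighbors A i, A i j * x j = -∑ j ∈ dynkinNeighbors A i, x j := by
    rw [← sum_neg_distrib]
    refine sum_congr rfl fun j hj => ?_
    rw [(mem_filter.1 hj).2.2, neg_one_mul]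
  have others : ∑ j ∈ univ.filter (fun j => ¬(j ≠ i ∧ A i j = -1)), A i j * x j = 2 * x i := by
    rw [sum_eq_single_of_mem i (by simp), hdiag]
    intro j hj hji
    rcases hoff j (Ne.symm hji) with h | h
    · rw [h, zero_mul]
    · exact absurd ⟨hji, h⟩ (mem_filter.1 hj).2
  rw [show univ.filter (fun j => j ≠ i ∧ A i j = -1) = dynkinNeighbors A i from rfl, neighbors,
    others]
  ring

end SimplyLaced

theorem stmt_18_general (r : ℕ) (A : Fin r → Fin r → ℤ)
    (hAdiag : ∀ i, A i i = 2)
    (hAoff : ∀ i j, i ≠ j → A i j = 0 ∨ A i j = -1) :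
    -- pairing ⟨α_i, x⟩ = Σ_j A i j x_j; form (x, γ) = Σ_{j,j'} x_j A j j' γ_{j'}
    let pair : Fin r → (Fin r → ℤ) → ℤ := fun i x => ∑ j, A i j * x j
    -- action of s_i and t_γ on 𝔥_ℤ ⊕ ℤK (sign twist applied below)
    let S : Fin r → ((Fin r → ℤ) × ℤ) → ((Fin r → ℤ) × ℤ) :=
      fun i v => (v.1 - pair i v.1 • Pi.single i 1, v.2)
    let T : (Fin r → ℤ) → ((Fin r → ℤ) × ℤ) → ((Fin r → ℤ) × ℤ) :=
      fun γ v => (v.1, v.2 - ∑ j, v.1 j * (∑ j', A j j' * γ j'))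
    -- action of s_i and t_γ on V = ℤc ⊕ ⊕_i ℤo_i
    let σ : Fin r → (ℤ × (Fin r → ℤ)) → (ℤ × (Fin r → ℤ)) :=
      fun i w => (-w.1, fun mIdx => if mIdx = i then
        w.2 i - ∑ j ∈ Finset.univ.filter (fun j => j ≠ i ∧ A i j = -1), w.2 j
        else -w.2 mIdx)
    let τ : (Fin r → ℤ) → (ℤ × (Fin r → ℤ)) → (ℤ × (Fin r → ℤ)) :=
      fun γ w => (w.1 + ∑ j, w.2 j * (∑ j', A j j' * γ j'), w.2)
    -- the map K ↦ c, α_i^∨ ↦ −o_i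
    let Φ : ((Fin r → ℤ) × ℤ) → (ℤ × (Fin r → ℤ)) := fun v => (v.2, fun i => -v.1 i)
    Function.Bijective Φ ∧
    (∀ (i : Fin r) (v : (Fin r → ℤ) × ℤ), Φ (-(S i v)) = σ i (Φ v)) ∧
    (∀ (γ : Fin r → ℤ) (v : (Fin r → ℤ) × ℤ), Φ (T γ v) = τ γ (Φ v)) := by
  intro pair S T σ τ Φ
  refine ⟨((Equiv.prodComm _ _).trans ((Equiv.refl ℤ).prodCongr (Equiv.neg _))).bijective,
    fun i v => ?_, fun γ v => ?_⟩
  · refine Prod.ext rfl (funext fun m => ?_)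
    by_cases hm : m = i
    · subst hm
      refine Eq.trans ?_ (if_pos rfl).symm
      show - -(v.1 m - (∑ j, A m j * v.1 j) • Pi.single (M := fun _ => ℤ) m 1 m) =
        -v.1 m - ∑ j ∈ dynkinNeighbors A m, -v.1 j
      rw [neg_neg, Pi.single_eq_same, smul_eq_mul, mul_one,
        sum_cartan_row_mul_eq (hAdiag m) (hAoff m), sum_neg_distrib]
      ring
    · simp [Φ, S, σ, hm]
  · simp [Φ, T, τ, sum_neg_distrib, sub_eq_add_neg]

/-- Let `𝔤` be simply laced of rank `r` with Cartan matrix `A`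
(`A i i = 2`, `A i j ∈ {0, −1}` for `i ≠ j`, symmetric).  Let `V` be the ℤ-module with basis
`c, o_1, …, o_r` (modelled as `ℤ × (Fin r → ℤ)`) with the operators (`i = 1,…,r`):
`s_i(c) = −c`; `s_i(o_i) = o_i`; `s_i(o_j) = −o_j` if `(α_i,α_j) = 0`;
`s_i(o_j) = −o_j − o_i` if `(α_i,α_j) = −1`; `t_γ(c) = c` and
`t_γ(o_i) = o_i + ⟨α_i, γ⟩c` for `γ ∈ Q^∨`.  Then the map `K ⊗ 1 ↦ c`,
`α_i^∨ ⊗ 1 ↦ −o_i` is an isomorphism of `Ŵ`-modules `(𝔥_ℤ ⊕ ℤK) ⊗ ℤ_sign → V`, where `Ŵ`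
acts on `𝔥_ℤ ⊕ ℤK` (modelled as `(Fin r → ℤ) × ℤ`) by `s_i(x) = x − ⟨α_i,x⟩α_i^∨` and
`t_γ(x) = x − (x,γ)K`, and the sign twist negates the action of each `s_i`. -/
theorem stmt_18 (r : ℕ) (hr : 1 ≤ r) (A : Fin r → Fin r → ℤ)
    (hAdiag : ∀ i, A i i = 2) (hAsymm : ∀ i j, A i j = A j i)
    (hAoff : ∀ i j, i ≠ j → A i j = 0 ∨ A i j = -1) :
    -- pairing ⟨α_i, x⟩ = Σ_j A i j x_j; form (x, γ) = Σ_{j,j'} x_j A j j' γ_{j'}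
    let pair : Fin r → (Fin r → ℤ) → ℤ := fun i x => ∑ j, A i j * x j
    -- action of s_i and t_γ on 𝔥_ℤ ⊕ ℤK (sign twist applied below)
    let S : Fin r → ((Fin r → ℤ) × ℤ) → ((Fin r → ℤ) × ℤ) :=
      fun i v => (v.1 - pair i v.1 • Pi.single i 1, v.2)
    let T : (Fin r → ℤ) → ((Fin r → ℤ) × ℤ) → ((Fin r → ℤ) × ℤ) :=
      fun γ v => (v.1, v.2 - ∑ j, v.1 j * (∑ j', A j j' * γ j'))
    -- action of s_i and t_γ on V = ℤc ⊕ ⊕_i ℤo_i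
    let σ : Fin r → (ℤ × (Fin r → ℤ)) → (ℤ × (Fin r → ℤ)) :=
      fun i w => (-w.1, fun mIdx => if mIdx = i then
        w.2 i - ∑ j ∈ Finset.univ.filter (fun j => j ≠ i ∧ A i j = -1), w.2 j
        else -w.2 mIdx)
    let τ : (Fin r → ℤ) → (ℤ × (Fin r → ℤ)) → (ℤ × (Fin r → ℤ)) :=
      fun γ w => (w.1 + ∑ j, w.2 j * (∑ j', A j j' * γ j'), w.2)
    -- the map K ↦ c, α_i^∨ ↦ −o_i
    let Φ : ((Fin r → ℤ) × ℤ) → (ℤ × (Fin r → ℤ)) := fun v => (v.2, fun i => -v.1 i)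
    Function.Bijective Φ ∧
    (∀ (i : Fin r) (v : (Fin r → ℤ) × ℤ), Φ (-(S i v)) = σ i (Φ v)) ∧
    (∀ (γ : Fin r → ℤ) (v : (Fin r → ℤ) × ℤ), Φ (T γ v) = τ γ (Φ v)) :=
  stmt_18_general r A hAdiag hAoff
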